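/- The remove-leafs simplification is unsound in the presence of weak rules: there exist abstract rewrite systems (on a type of terms) with strict rules S = {g# → c0}, weak rules W = {f# → c2(f#, g#)}, and start term f#, such that the relative relation S/W admits arbitrarily long derivations from f# (the derivation height of f# is undefined), while after removing the strict rule (S' = ∅) the derivation height of f# with respect to S'/W is 0. -/

import Mathlib

/-- Terms built from the constants `f#`, `g#`, `c₀` and the binary compound symbol `c₂`. -/
inductive T19 : Type
  | fs : T19   -- f#
  | gs : T19   -- g#
  | c0 : T19   -- c₀
  | c2 : T19 → T19 → T19  -- c₂(·,·)

/-- The weak rewrite relation: rewrite any occurrence of `f#` to `c₂(f#, g#)`. -/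
inductive Wstep : T19 → T19 → Prop
  | root : Wstep T19.fs (T19.c2 T19.fs T19.gs)
  | left {s t u} : Wstep s t → Wstep (T19.c2 s u) (T19.c2 t u)
  | right {s t u} : Wstep s t → Wstep (T19.c2 u s) (T19.c2 u t)

/-- The strict rewrite relation: rewrite any occurrence of `g#` to `c₀`. -/
inductive Sstep : T19 → T19 → Prop
  | root : Sstep T19.gs T19.c0
  | left {s t u} : Sstep s t → Sstep (T19.c2 s u) (T19.c2 t u)
  | right {s t u} : Sstep s t → Sstep (T19.c2 u s) (T19.c2 u t)

/-- The relative relation `S/W = W* ∘ S ∘ W*`. -/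
def relStep (S W : T19 → T19 → Prop) (s t : T19) : Prop :=
  ∃ u v, Relation.ReflTransGen W s u ∧ S u v ∧ Relation.ReflTransGen W v t

/-!
Starting from `f#`, one weak step creates a fresh `g#` next to `f#`, and one strict step consumes
it; since the `f#` survives, this can be repeated indefinitely, so `f#` has unbounded
`S/W`-derivations. Every `S/W`-step contains exactly one strict step, so with no strict rules
there is no step at all.
-/

lemma relStep.map {S W : T19 → T19 → Prop} {s t : T19} (f : T19 → T19)
    (hS : ∀ a b, S a b → S (f a) (f b)) (hW : ∀ a b, W a b → W (f a) (f b))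
    (h : relStep S W s t) : relStep S W (f s) (f t) := by
  obtain ⟨u, v, hsu, huv, hvt⟩ := h
  exact ⟨f u, f v, hsu.lift f hW, hS u v huv, hvt.lift f hW⟩

lemma relStep_c2_left {s t : T19} (u : T19) (h : relStep Sstep Wstep s t) :
    relStep Sstep Wstep (T19.c2 s u) (T19.c2 t u) :=
  h.map (T19.c2 · u) (fun _ _ => Sstep.left) (fun _ _ => Wstep.left)

lemma not_relStep_of_no_strict (W : T19 → T19 → Prop) (s t : T19) :
    ¬ relStep (fun _ _ => False) W s t :=
  fun ⟨_, _, _, hS, _⟩ => hS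

def fsPadded : ℕ → T19
  | 0 => T19.fs
  | n + 1 => T19.c2 (fsPadded n) T19.c0

lemma relStep_fsPadded_succ : ∀ n, relStep Sstep Wstep (fsPadded n) (fsPadded (n + 1))
  | 0 => ⟨T19.c2 T19.fs T19.gs, T19.c2 T19.fs T19.c0,
      .single Wstep.root, Sstep.right Sstep.root, .refl⟩
  | n + 1 => relStep_c2_left T19.c0 (relStep_fsPadded_succ n)

/-- the remove-leafs simplification is unsound in the presence of weak
rules. With strict rule `g# → c₀` and weak rule `f# → c₂(f#, g#)`, the relative relation
`S/W` admits arbitrarily long derivations from `f#` (the derivation height of `f#` is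
undefined), while after removing the strict rule (`S' = ∅`) every `S'/W`-chain from `f#`
has length `0`. -/
theorem stmt_19 :
    (∀ B : ℕ, ∃ (n : ℕ) (c : ℕ → T19), B < n ∧ c 0 = T19.fs ∧
      ∀ i < n, relStep Sstep Wstep (c i) (c (i + 1))) ∧
    (∀ (n : ℕ) (c : ℕ → T19), c 0 = T19.fs →
      (∀ i < n, relStep (fun _ _ => False) Wstep (c i) (c (i + 1))) → n = 0) := by
  refine ⟨fun B => ⟨B + 1, fsPadded, B.lt_succ_self, rfl, fun i _ => relStep_fsPadded_succ i⟩, ?_⟩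
  intro n c _ hchain
  by_contra hn
  exact not_relStep_of_no_strict Wstep _ _ (hchain 0 (Nat.pos_of_ne_zero hn))
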